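/- Let B be a nonempty subset of (0,1) that is closed in ℝ. Then the exit set B_e^c is nonempty. -/
import Mathlib


open Set MeasureTheory Filter

open Classical in
/-- The doubling map `θ` on `[0,1)`: `θ(ξ) = 2ξ` for `ξ < 1/2`, `2ξ − 1` otherwise. -/
noncomputable def theta (ξ : ℝ) : ℝ := if ξ < 1/2 then 2*ξ else 2*ξ - 1

open Classical in
/-- `ξ* = ξ + 1/2` for `ξ ∈ [0,1/2]` and `ξ − 1/2` for `ξ ∈ (1/2,1]`. -/
noncomputable def starR (ξ : ℝ) : ℝ := if ξ ≤ 1/2 then ξ + 1/2 else ξ - 1/2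


/-- The exit set `B_e^c = {ξ/2 + j/2 : ξ ∈ B, j ∈ {0,1}} ∩ ([0,1] \ B)`. -/
def BeI (B : Set ℝ) : Set ℝ :=
  {y | ∃ ξ ∈ B, y = ξ/2 ∨ y = ξ/2 + 1/2} ∩ (Set.Icc (0:ℝ) 1 \ B)

/-- The barrier set `B_b = (B_e^c)*`. -/
noncomputable def BbI (B : Set ℝ) : Set ℝ := starR '' BeI B


/-- If `B ⊂ (0,1)` is nonempty and closed in `ℝ`, then `B_e^c ≠ ∅`. -/
theorem exitSet_nonempty (B : Set ℝ) (hne : B.Nonempty) (hB : B ⊆ Set.Ioo 0 1)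
    (hcl : IsClosed B) : (BeI B).Nonempty := by
  have hbdd : BddBelow B := ⟨0, fun x hx => le_of_lt (hB hx).1⟩
  have ha : sInf B ∈ B := hcl.csInf_mem hne hbdd
  have h01 := hB ha
  refine ⟨sInf B / 2, ⟨sInf B, ha, Or.inl rfl⟩, ⟨by constructor <;> linarith [h01.1, h01.2], ?_⟩⟩
  intro hmem
  have := csInf_le hbdd hmem
  linarith [h01.1]
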